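/- arXiv:2106.05187 — 2 statements merged into one kernel-verified Lean document; each statement's English description precedes it below -/
import Mathlib

section
/- Let f : ℝⁿ → ℝ be differentiable with |‖∇f(x)‖ − 1| < ε for all x, where 0 < ε < 1, and Lipschitz-smooth with constant M > 0. Fix x with ∇f(x) ≠ 0, let n̂ = ∇f(x)/‖∇f(x)‖, let d ∈ ℝ be a displacement, x̂ = x + d·n̂, and suppose ∇f(x̂) ≠ 0. Then the normalized gradients satisfy ‖∇f(x̂)/‖∇f(x̂)‖ − ∇f(x)/‖∇f(x)‖‖ ≤ ((1 + ε)/(1 − ε))·|d/‖∇f(x)‖|·M. -/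
open scoped RealInnerProductSpace

lemma aux_norm {E : Type*} [NormedAddCommGroup E] [InnerProductSpace ℝ E]
    (a b : E) (ha : a ≠ 0) (hb : b ≠ 0) (c : ℝ) (hc : 0 ≤ c)
    (hca : c ≤ ‖a‖) (hcb : c ≤ ‖b‖) :
    c * ‖‖a‖⁻¹ • a - ‖b‖⁻¹ • b‖ ≤ ‖a - b‖ := by
  have hna : (0:ℝ) < ‖a‖ := norm_pos_iff.mpr ha
  have hnb : (0:ℝ) < ‖b‖ := norm_pos_iff.mpr hb
  have hD : (0:ℝ) ≤ ‖‖a‖⁻¹ • a - ‖b‖⁻¹ • b‖ := norm_nonneg _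
  have h1 : ‖‖a‖⁻¹ • a - ‖b‖⁻¹ • b‖ ^ 2 = 2 - 2 * (‖a‖⁻¹ * ‖b‖⁻¹ * ⟪a, b⟫) := by
    rw [@norm_sub_sq_real, norm_smul, norm_smul, real_inner_smul_left,
      real_inner_smul_right, Real.norm_eq_abs, Real.norm_eq_abs, abs_inv, abs_inv,
      abs_norm, abs_norm]
    field_simp
    ring
  have h2 : ‖a - b‖ ^ 2 = ‖a‖ ^ 2 + ‖b‖ ^ 2 - 2 * ⟪a, b⟫ := by
    rw [@norm_sub_sq_real]; ring
  have hcs : ⟪a, b⟫ ≤ ‖a‖ * ‖b‖ := real_inner_le_norm a b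
  have hsq : (c * ‖‖a‖⁻¹ • a - ‖b‖⁻¹ • b‖) ^ 2 ≤ ‖a - b‖ ^ 2 := by
    have key : c ^ 2 * (2 - 2 * (‖a‖⁻¹ * ‖b‖⁻¹ * ⟪a, b⟫)) ≤ ‖a‖ ^ 2 + ‖b‖ ^ 2 - 2 * ⟪a, b⟫ := by
      have e : ‖a‖⁻¹ * ‖b‖⁻¹ * ⟪a, b⟫ * (‖a‖ * ‖b‖) = ⟪a, b⟫ := by
        field_simp
      nlinarith [sq_nonneg (‖a‖ - ‖b‖), mul_pos hna hnb, sq_nonneg c,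
        mul_le_mul hca hcb hc (le_of_lt hna)]
    calc (c * ‖‖a‖⁻¹ • a - ‖b‖⁻¹ • b‖) ^ 2
        = c ^ 2 * (2 - 2 * (‖a‖⁻¹ * ‖b‖⁻¹ * ⟪a, b⟫)) := by rw [mul_pow, h1]
      _ ≤ ‖a - b‖ ^ 2 := by rw [h2]; exact key
  exact (pow_le_pow_iff_left₀ (mul_nonneg hc hD) (norm_nonneg _) two_ne_zero).mp hsq

theorem stmt_5 (n : ℕ) (f : EuclideanSpace ℝ (Fin n) → ℝ) (ε M : ℝ)
    (hf : Differentiable ℝ f) (hε0 : 0 < ε) (hε1 : ε < 1) (hM : 0 < M)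
    (heik : ∀ y, |‖gradient f y‖ - 1| < ε)
    (hsmooth : ∀ y z, ‖gradient f y - gradient f z‖ ≤ M * ‖y - z‖)
    (x : EuclideanSpace ℝ (Fin n)) (d : ℝ)
    (hx : gradient f x ≠ 0)
    (xhat : EuclideanSpace ℝ (Fin n))
    (hxhatdef : xhat = x + (d / ‖gradient f x‖) • gradient f x)
    (hxhat : gradient f xhat ≠ 0) :
    ‖(‖gradient f xhat‖⁻¹ • gradient f xhat) - (‖gradient f x‖⁻¹ • gradient f x)‖ ≤
      ((1 + ε) / (1 - ε)) * |d / ‖gradient f x‖| * M := by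
  set a := gradient f xhat with hadef
  set b := gradient f x with hbdef
  have hna : (0:ℝ) < ‖a‖ := norm_pos_iff.mpr hxhat
  have hnb : (0:ℝ) < ‖b‖ := norm_pos_iff.mpr hx
  have h1ε : (0:ℝ) < 1 - ε := by linarith
  have haε : 1 - ε ≤ ‖a‖ := by have := abs_lt.mp (heik xhat); linarith [this.1]
  have hbε1 : 1 - ε ≤ ‖b‖ := by have := abs_lt.mp (heik x); linarith [this.1]
  have hbε2 : ‖b‖ ≤ 1 + ε := by have := abs_lt.mp (heik x); linarith [this.2]
  have hdist : ‖xhat - x‖ = |d| := by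
    rw [hxhatdef]
    simp only [add_sub_cancel_left, norm_smul, Real.norm_eq_abs, abs_div, abs_norm]
    field_simp
  have hlip : ‖a - b‖ ≤ M * |d| := by
    have := hsmooth xhat x
    rwa [hdist] at this
  have key := aux_norm a b hxhat hx (1 - ε) h1ε.le haε hbε1
  set D := ‖‖a‖⁻¹ • a - ‖b‖⁻¹ • b‖ with hDdef
  have hD0 : 0 ≤ D := norm_nonneg _
  have habs : |d / ‖b‖| = |d| / ‖b‖ := by rw [abs_div, abs_norm]
  rw [habs]
  have heq : ((1 + ε) / (1 - ε)) * (|d| / ‖b‖) * M = ((1 + ε) * |d| * M) / ((1 - ε) * ‖b‖) := by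
    field_simp
  rw [heq, le_div_iff₀ (by positivity)]
  nlinarith [mul_le_mul_of_nonneg_left hbε2 (mul_nonneg hM.le (abs_nonneg d)),
    mul_le_mul_of_nonneg_right hlip hnb.le, abs_nonneg d]
end

section
/- Let f be a signed distance function on ℝⁿ satisfying |‖∇f(x)‖ − 1| < ε for all x, 0 < ε < 1, Lipschitz-smooth with constant M. If d : ℝⁿ → ℝ satisfies |d(x)| ≤ α for all x, then for x̂ = x + (d(x)/‖∇f(x)‖)·∇f(x), the normalized gradient at x̂ differs from that at x by at most ((1+ε)/(1−ε))·(α/(1−ε))·M. -/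
lemma normalized_diff_le {E : Type*} [NormedAddCommGroup E] [InnerProductSpace ℝ E]
    (u v : E) (hu : u ≠ 0) (hv : v ≠ 0) :
    ‖‖u‖⁻¹ • u - ‖v‖⁻¹ • v‖ ≤ 2 * ‖u - v‖ / (‖u‖ + ‖v‖) := by
  set a := ‖u‖ with ha
  set b := ‖v‖ with hb
  have hau : (0:ℝ) < a := norm_pos_iff.mpr hu
  have hbv : (0:ℝ) < b := norm_pos_iff.mpr hv
  set t := (inner ℝ u v : ℝ) with htdef
  have htle : |t| ≤ a * b := abs_real_inner_le_norm u v
  have hnu : ‖(‖u‖⁻¹ • u)‖ = 1 := norm_smul_inv_norm hu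
  have hnv : ‖(‖v‖⁻¹ • v)‖ = 1 := norm_smul_inv_norm hv
  have hip : (inner ℝ (‖u‖⁻¹ • u) (‖v‖⁻¹ • v) : ℝ) = a⁻¹ * b⁻¹ * t := by
    rw [real_inner_smul_left, real_inner_smul_right]; ring
  have hsq1 : ‖‖u‖⁻¹ • u - ‖v‖⁻¹ • v‖ ^ 2 = 2 - 2 * (a⁻¹ * b⁻¹ * t) := by
    rw [norm_sub_sq_real, hnu, hnv, hip]; ring
  have hsq2 : ‖u - v‖ ^ 2 = a ^ 2 + b ^ 2 - 2 * t := by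
    rw [norm_sub_sq_real]; ring
  have hkey : ‖‖u‖⁻¹ • u - ‖v‖⁻¹ • v‖ ^ 2 ≤ (2 * ‖u - v‖ / (a + b)) ^ 2 := by
    rw [hsq1, div_pow, le_div_iff₀ (by positivity), mul_pow, hsq2]
    have h1 : -(a*b) ≤ t := neg_le_of_abs_le htle
    have h2 : 0 ≤ (a - b)^2 * (a*b + t) := by nlinarith
    have hab : 0 < a * b := mul_pos hau hbv
    have : (2 - 2 * (a⁻¹ * b⁻¹ * t)) * (a + b)^2 * (a*b)
        ≤ 2^2 * (a^2 + b^2 - 2*t) * (a*b) := by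
      field_simp
      nlinarith [sq_nonneg (a - b), sq_nonneg (a + b)]
    exact le_of_mul_le_mul_right this hab
  have h1 : (0:ℝ) ≤ 2 * ‖u - v‖ / (a + b) := by positivity
  nlinarith [norm_nonneg (‖u‖⁻¹ • u - ‖v‖⁻¹ • v)]

theorem stmt_11 (n : ℕ) (f : EuclideanSpace ℝ (Fin n) → ℝ) (ε M α : ℝ)
    (hf : Differentiable ℝ f) (hε0 : 0 < ε) (hε1 : ε < 1) (hM : 0 < M)
    (heik : ∀ y, |‖gradient f y‖ - 1| < ε)
    (hsmooth : ∀ y z, ‖gradient f y - gradient f z‖ ≤ M * ‖y - z‖)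
    (d : EuclideanSpace ℝ (Fin n) → ℝ) (hd : ∀ x, |d x| ≤ α)
    (x : EuclideanSpace ℝ (Fin n))
    (xhat : EuclideanSpace ℝ (Fin n))
    (hxhatdef : xhat = x + (d x / ‖gradient f x‖) • gradient f x)
    (hxhat : gradient f xhat ≠ 0) :
    ‖(‖gradient f xhat‖⁻¹ • gradient f xhat) - (‖gradient f x‖⁻¹ • gradient f x)‖ ≤
      ((1 + ε) / (1 - ε)) * (α / (1 - ε)) * M := by
  set u := gradient f xhat
  set v := gradient f x with hvdef
  have hεε : (0:ℝ) < 1 - ε := by linarith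
  have hnu : 1 - ε < ‖u‖ := by have := heik xhat; rw [abs_lt] at this; linarith [this.1]
  have hnv : 1 - ε < ‖v‖ := by have := heik x; rw [abs_lt] at this; linarith [this.1]
  have hv : v ≠ 0 := by
    intro h; rw [h, norm_zero] at hnv; linarith
  have hα : 0 ≤ α := le_trans (abs_nonneg _) (hd x)
  have hdist : ‖xhat - x‖ = |d x| := by
    rw [hxhatdef]
    simp only [add_sub_cancel_left, norm_smul, Real.norm_eq_abs, abs_div, abs_norm]
    rw [div_mul_cancel₀]
    exact ne_of_gt (by linarith : (0:ℝ) < ‖v‖)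
  have hlip : ‖u - v‖ ≤ M * α := by
    calc ‖u - v‖ ≤ M * ‖xhat - x‖ := hsmooth xhat x
    _ = M * |d x| := by rw [hdist]
    _ ≤ M * α := by exact mul_le_mul_of_nonneg_left (hd x) hM.le
  have h1 : ‖‖u‖⁻¹ • u - ‖v‖⁻¹ • v‖ ≤ 2 * ‖u - v‖ / (‖u‖ + ‖v‖) :=
    normalized_diff_le u v hxhat hv
  have h2 : 2 * ‖u - v‖ / (‖u‖ + ‖v‖) ≤ 2 * (M * α) / (2 * (1 - ε)) := by
    apply div_le_div₀ (by positivity) (by linarith) (by linarith) (by linarith)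
  have h3 : 2 * (M * α) / (2 * (1 - ε)) = M * α / (1 - ε) := by
    field_simp
  have h4 : M * α / (1 - ε) ≤ (1 + ε) * α * M / ((1 - ε) * (1 - ε)) :=
    div_le_div₀ (by positivity) (by nlinarith [mul_nonneg (mul_nonneg hε0.le hα) hM.le]) (by positivity) (by nlinarith)
  have h5 : (1 + ε) * α * M / ((1 - ε) * (1 - ε)) = ((1 + ε) / (1 - ε)) * (α / (1 - ε)) * M := by
    field_simp
  linarith [h1, h2, h3.le, h4, h3.ge, h5.le, h5.ge]
end
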